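/- Let X be a compact pospace whose partial order is lower open, and let Y be a complete lattice carrying a Lawson-lattice topology. If f, g : X → Y are monotone continuous maps that are homotopic as continuous maps (there is a continuous H : X × [0,1] → Y with H(·,0) = f and H(·,1) = g), then f and g are homotopic through monotone maps: there exists a continuous K : X × [0,1] → Y with K(·,0) = f, K(·,1) = g, and K(·,t) monotone for every t ∈ [0,1]. -/

import Mathlib

/-!
The homotopy is replaced by its lower envelope `K (x, t) = ⨅ {H (x', t) | x ≤ x'}`, which is
monotone in `x` and equals `f`, `g` at the ends because these are monotone. For continuity, the
compact sets `H '' (Ici x ×ˢ {t})` depend continuously on `(x, t)` in the Vietoris sense: upper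
semicontinuously because in a compact pospace the lower closure of a closed set is closed, lower
semicontinuously because the order is lower open. In a compact lattice with continuous `⊓` and
small inf-closed neighbourhoods, `sInf` is continuous along such families, since a closed
inf-closed set contains the infimum of each of its nonempty subsets.
-/

open Set Filter Topology unitInterval

section CompactSemilattice

variable {α Y : Type*} [TopologicalSpace Y]

theorem ContinuousInf.orderClosedTopology [SemilatticeInf Y] [ContinuousInf Y] [T2Space Y] :
    OrderClosedTopology Y where
  isClosed_le' := by
    simpa only [inf_eq_left] using isClosed_eq (continuous_inf (L := Y)) continuous_fst

theorem InfClosed.closure [SemilatticeInf Y] [ContinuousInf Y] {s : Set Y} (hs : InfClosed s) :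
    InfClosed (closure s) :=
  fun _ ha _ hb => map_mem_closure₂ continuous_inf ha hb fun _ ha' _ hb' => hs ha' hb'

variable [CompleteLattice Y] [OrderClosedTopology Y]

theorem InfClosed.sInf_mem_of_isCompact {T B : Set Y} (hT : InfClosed T) (hTc : IsCompact T)
    (hB : B.Nonempty) (hBT : B ⊆ T) : sInf B ∈ T := by
  classical
  obtain ⟨b₀, hb₀⟩ := hB
  have hfin (u : Finset B) : (T ∩ Ici (sInf B) ∩ ⋂ b ∈ u, Iic (b : Y)).Nonempty := by
    let e := (insert ⟨b₀, hb₀⟩ u).inf' (Finset.insert_nonempty _ _) Subtype.val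
    refine ⟨e, ⟨hT.finsetInf'_mem _ fun b _ => hBT b.2, ?_⟩, mem_iInter₂.2 fun b hb => ?_⟩
    · exact Finset.le_inf' _ _ fun b _ => sInf_le b.2
    · exact Finset.inf'_le _ (Finset.mem_insert_of_mem hb)
  obtain ⟨z, ⟨hzT, hBz⟩, hzB⟩ := (hTc.inter_right isClosed_Ici).inter_iInter_nonempty
    (fun b : B => Iic (b : Y)) (fun _ => isClosed_Iic) hfin
  have : z = sInf B := le_antisymm (le_sInf fun b hb => mem_iInter.1 hzB ⟨b, hb⟩) hBz
  exact this ▸ hzT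

theorem InfClosed.sInf_mem_of_forall_exists_between {T B : Set Y} (hT : InfClosed T)
    (hTc : IsCompact T) (hB : B.Nonempty) (h : ∀ b ∈ B, ∃ e ∈ T, sInf B ≤ e ∧ e ≤ b) :
    sInf B ∈ T := by
  have hE : sInf (T ∩ Ici (sInf B)) = sInf B := by
    refine le_antisymm (le_sInf fun b hb => ?_) (le_sInf fun e he => he.2)
    obtain ⟨e, heT, hBe, heb⟩ := h b hb
    exact sInf_le_of_le ⟨heT, hBe⟩ heb
  obtain ⟨b, hb⟩ := hB
  obtain ⟨e, heT, hBe, -⟩ := h b hb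
  have hEne : (T ∩ Ici (sInf B)).Nonempty := ⟨e, heT, hBe⟩
  rw [← hE]
  exact ((hT.inter fun _ ha _ hb => le_inf ha hb).sInf_mem_of_isCompact
    (hTc.inter_right isClosed_Ici) hEne Subset.rfl).1

variable [CompactSpace Y] [ContinuousInf Y]

theorem exists_mem_nhds_isClosed_infClosed_subset {y : Y}
    (hsmall : ∀ W ∈ 𝓝 y, ∃ S ∈ 𝓝 y, InfClosed S ∧ S ⊆ W) {W : Set Y} (hW : W ∈ 𝓝 y) :
    ∃ T ∈ 𝓝 y, IsClosed T ∧ InfClosed T ∧ T ⊆ W := by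
  obtain ⟨W', hW', hW'c, hW'W⟩ := exists_mem_nhds_isClosed_subset hW
  obtain ⟨S, hS, hSinf, hSW'⟩ := hsmall W' hW'
  exact ⟨closure S, mem_of_superset hS subset_closure, isClosed_closure, hSinf.closure,
    (closure_minimal hSW' hW'c).trans hW'W⟩

/-- The points `d` each neighbourhood of which eventually contains an upper bound of `sInf (S p)`
form a closed sub-semilattice containing `S₀`, hence contain `sInf S₀`. -/
theorem eventually_exists_mem_sInf_le {l : Filter α} {S : α → Set Y} {S₀ : Set Y}
    (hne : S₀.Nonempty) (hlower : ∀ c ∈ S₀, ∀ O ∈ 𝓝 c, ∀ᶠ p in l, ∃ b ∈ S p, b ∈ O)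
    {G : Set Y} (hG : G ∈ 𝓝 (sInf S₀)) : ∀ᶠ p in l, ∃ m ∈ G, sInf (S p) ≤ m := by
  set L := {d : Y | ∀ G ∈ 𝓝 d, ∀ᶠ p in l, ∃ m ∈ G, sInf (S p) ≤ m}
  have hLc : IsClosed L := isClosed_of_closure_subset fun d hd G hG => by
    obtain ⟨G', hG'G, hG'o, hdG'⟩ := mem_nhds_iff.1 hG
    obtain ⟨d', hd'G', hd'L⟩ := mem_closure_iff.1 hd G' hG'o hdG'
    exact (hd'L G' (hG'o.mem_nhds hd'G')).mono fun p ⟨m, hm, hpm⟩ => ⟨m, hG'G hm, hpm⟩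
  have hLinf : InfClosed L := fun d₁ h₁ d₂ h₂ G hG => by
    obtain ⟨u, hu, v, hv, huv⟩ := mem_nhds_prod_iff.1 (continuous_inf.tendsto (d₁, d₂) hG)
    filter_upwards [h₁ u hu, h₂ v hv] with p ⟨m₁, hm₁, hpm₁⟩ ⟨m₂, hm₂, hpm₂⟩
    exact ⟨m₁ ⊓ m₂, huv (mk_mem_prod hm₁ hm₂), le_inf hpm₁ hpm₂⟩
  have hS₀L : S₀ ⊆ L := fun c hc G hG =>
    (hlower c hc G hG).mono fun p ⟨b, hb, hbG⟩ => ⟨b, hbG, sInf_le hb⟩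
  exact hLinf.sInf_mem_of_isCompact hLc.isCompact hne hS₀L G hG

theorem tendsto_sInf_of_hemicontinuous
    (hsmall : ∀ y : Y, ∀ W ∈ 𝓝 y, ∃ S ∈ 𝓝 y, InfClosed S ∧ S ⊆ W)
    {l : Filter α} {S : α → Set Y} {S₀ : Set Y} (hS₀ : IsCompact S₀) (hne : S₀.Nonempty)
    (hupper : ∀ U ∈ 𝓝ˢ S₀, ∀ᶠ p in l, S p ⊆ U)
    (hlower : ∀ c ∈ S₀, ∀ O ∈ 𝓝 c, ∀ᶠ p in l, ∃ b ∈ S p, b ∈ O) :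
    Tendsto (fun p => sInf (S p)) l (𝓝 (sInf S₀)) := by
  intro W hW
  obtain ⟨T, hT, hTc, hTinf, hTW⟩ := exists_mem_nhds_isClosed_infClosed_subset (hsmall _) hW
  have hloc : ∀ b ∈ S₀, {q : Y × α | ∃ m, sInf (S q.2) ≤ m ∧ q.1 ⊓ m ∈ T} ∈ 𝓝 b ×ˢ l := by
    intro b hb
    have hT' : T ∈ 𝓝 (b ⊓ sInf S₀) := by rwa [inf_eq_right.2 (sInf_le hb)]
    obtain ⟨u, hu, v, hv, huv⟩ := mem_nhds_prod_iff.1 (continuous_inf.tendsto (b, sInf S₀) hT')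
    filter_upwards [prod_mem_prod hu (eventually_exists_mem_sInf_le hne hlower hv)]
      with ⟨z, p⟩ ⟨hz, m, hm, hpm⟩
    exact ⟨m, hpm, huv (mk_mem_prod hz hm)⟩
  obtain ⟨U, hU, P, hP, hUP⟩ := mem_prod_iff.1 (hS₀.mem_nhdsSet_prod_of_forall hloc)
  rw [mem_map]
  filter_upwards [hupper U hU, hP, hlower _ hne.some_mem univ univ_mem] with p hSU hp ⟨b₀, hb₀, _⟩
  refine hTW (hTinf.sInf_mem_of_forall_exists_between hTc.isCompact ⟨b₀, hb₀⟩ fun b hb => ?_)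
  obtain ⟨m, hpm, hbm⟩ := hUP (mk_mem_prod (hSU hb) hp)
  exact ⟨b ⊓ m, hbm, le_inf (sInf_le hb) hpm, inf_le_left⟩

end CompactSemilattice

section Pospace

variable {X P Y : Type*} [TopologicalSpace X] [TopologicalSpace P] [TopologicalSpace Y]
  {H : X × P → Y}

theorem eventually_exists_image_Ici_mem [Preorder X]
    (hlo : ∀ V : Set X, IsOpen V → IsOpen (lowerClosure V : Set X)) (hH : Continuous H)
    {x₀ c : X} (hc : x₀ ≤ c) {t₀ : P} {O : Set Y} (hO : O ∈ 𝓝 (H (c, t₀))) :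
    ∀ᶠ p in 𝓝 (x₀, t₀), ∃ b ∈ (fun u => H (u, p.2)) '' Ici p.1, b ∈ O := by
  obtain ⟨V, hV, B, hB, hVB⟩ := mem_nhds_prod_iff.1 (hH.continuousAt.preimage_mem_nhds hO)
  have hx₀ : ∀ᶠ x in 𝓝 x₀, ∃ v ∈ interior V, x ≤ v :=
    (hlo _ isOpen_interior).mem_nhds ⟨c, mem_interior_iff_mem_nhds.2 hV, hc⟩
  filter_upwards [continuousAt_fst.eventually hx₀, continuousAt_snd.eventually hB]
    with p ⟨v, hv, hpv⟩ hpB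
  exact ⟨_, ⟨v, hpv, rfl⟩, hVB ⟨interior_subset hv, hpB⟩⟩

variable [PartialOrder X] [CompactSpace X] [OrderClosedTopology X]

theorem IsClosed.lowerClosure_of_compactSpace {s : Set X} (hs : IsClosed s) :
    IsClosed (lowerClosure s : Set X) := by
  have : (lowerClosure s : Set X) = Prod.fst '' ({p : X × X | p.1 ≤ p.2} ∩ Prod.snd ⁻¹' s) := by
    ext x
    exact ⟨fun ⟨y, hy, hxy⟩ => ⟨(x, y), ⟨hxy, hy⟩, rfl⟩,
      fun ⟨q, ⟨hq, hqs⟩, hqx⟩ => hqx ▸ ⟨q.2, hqs, hq⟩⟩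
  rw [this]
  exact (((_root_.isClosed_le continuous_fst continuous_snd).inter
    (hs.preimage continuous_snd)).isCompact.image continuous_fst).isClosed

theorem eventually_Ici_subset {x₀ : X} {U : Set X} (hU : U ∈ 𝓝ˢ (Ici x₀)) :
    ∀ᶠ x in 𝓝 x₀, Ici x ⊆ U := by
  obtain ⟨V, hVo, hxV, hVU⟩ := mem_nhdsSet_iff_exists.1 hU
  have hx₀ : x₀ ∈ (lowerClosure Vᶜ : Set X)ᶜ := fun ⟨v, hv, hxv⟩ => hv (hxV hxv)
  filter_upwards [hVo.isClosed_compl.lowerClosure_of_compactSpace.isOpen_compl.mem_nhds hx₀]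
    with x hx y hxy
  exact hVU (by_contra fun hyV => hx ⟨y, hyV, hxy⟩)

theorem eventually_image_Ici_subset (hH : Continuous H) {x₀ : X} {t₀ : P} {U : Set Y}
    (hU : U ∈ 𝓝ˢ ((fun u => H (u, t₀)) '' Ici x₀)) :
    ∀ᶠ p in 𝓝 (x₀, t₀), (fun u => H (u, p.2)) '' Ici p.1 ⊆ U := by
  have hloc : ∀ u ∈ Ici x₀, H ⁻¹' U ∈ 𝓝 u ×ˢ 𝓝 t₀ := fun u hu => by
    rw [← nhds_prod_eq]
    exact hH.continuousAt.preimage_mem_nhds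
      (mem_nhdsSet_iff_forall.1 hU _ (mem_image_of_mem _ hu))
  obtain ⟨A, hA, B, hB, hAB⟩ :=
    mem_prod_iff.1 (isClosed_Ici.isCompact.mem_nhdsSet_prod_of_forall hloc)
  filter_upwards [continuousAt_fst.eventually (eventually_Ici_subset hA),
    continuousAt_snd.eventually hB] with p hpA hpB
  rintro _ ⟨u, hu, rfl⟩
  exact hAB ⟨hpA hu, hpB⟩

end Pospace

theorem stmt_8_general {X Y : Type*} [TopologicalSpace X] [PartialOrder X] [CompactSpace X]
    (hpos : IsClosed {p : X × X | p.1 ≤ p.2})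
    (hlo : ∀ V : Set X, IsOpen V → IsOpen {x : X | ∃ v ∈ V, x ≤ v})
    [CompleteLattice Y] [TopologicalSpace Y] [CompactSpace Y] [T2Space Y]
    (hinf : Continuous fun p : Y × Y => p.1 ⊓ p.2)
    (hbasis : ∀ y : Y, (nhds y).HasBasis
      (fun s : Set Y => s ∈ nhds y ∧ ∀ a ∈ s, ∀ b ∈ s, a ⊓ b ∈ s) id)
    (f g : X → Y) (hfm : Monotone f)
    (hgm : Monotone g)
    (H : X × I → Y) (hH : Continuous H)
    (hH0 : ∀ x, H (x, 0) = f x) (hH1 : ∀ x, H (x, 1) = g x) :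
    ∃ K : X × I → Y, Continuous K ∧
      (∀ x, K (x, 0) = f x) ∧ (∀ x, K (x, 1) = g x) ∧
      (∀ t : I, Monotone fun x : X => K (x, t)) := by
  have : OrderClosedTopology X := ⟨hpos⟩
  have : ContinuousInf Y := ⟨hinf⟩
  have := ContinuousInf.orderClosedTopology (Y := Y)
  have hsmall (y : Y) (W : Set Y) (hW : W ∈ 𝓝 y) : ∃ S ∈ 𝓝 y, InfClosed S ∧ S ⊆ W := by
    obtain ⟨S, ⟨hS, hSinf⟩, hSW⟩ := (hbasis y).mem_iff.1 hW
    exact ⟨S, hS, fun a ha b hb => hSinf a ha b hb, hSW⟩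
  refine ⟨fun p => sInf ((fun u => H (u, p.2)) '' Ici p.1), ?_, fun x => ?_, fun x => ?_,
    fun t x₁ x₂ hx => sInf_le_sInf (image_mono (Ici_subset_Ici.2 hx))⟩
  · refine continuous_iff_continuousAt.2 fun ⟨x₀, t₀⟩ => tendsto_sInf_of_hemicontinuous hsmall
      (isClosed_Ici.isCompact.image (by fun_prop)) (nonempty_Ici.image _)
      (fun U hU => eventually_image_Ici_subset hH hU) ?_
    rintro _ ⟨c, hc, rfl⟩ O hO
    exact eventually_exists_image_Ici_mem hlo hH hc hO
  · simpa only [hH0] using (hfm.map_isLeast isLeast_Ici).isGLB.sInf_eq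
  · simpa only [hH1] using (hgm.map_isLeast isLeast_Ici).isGLB.sInf_eq

/-- Let `X` be a compact pospace with lower open partial order and `Y` a complete
lattice carrying a Lawson-lattice topology.  Monotone continuous maps `f, g : X → Y`
that are homotopic as continuous maps are homotopic through monotone maps. -/
theorem stmt_8 {X Y : Type*} [TopologicalSpace X] [PartialOrder X] [CompactSpace X]
    (hpos : IsClosed {p : X × X | p.1 ≤ p.2})
    (hlo : ∀ V : Set X, IsOpen V → IsOpen {x : X | ∃ v ∈ V, x ≤ v})
    [CompleteLattice Y] [TopologicalSpace Y] [CompactSpace Y] [T2Space Y]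
    (hinf : Continuous fun p : Y × Y => p.1 ⊓ p.2)
    (hbasis : ∀ y : Y, (nhds y).HasBasis
      (fun s : Set Y => s ∈ nhds y ∧ ∀ a ∈ s, ∀ b ∈ s, a ⊓ b ∈ s) id)
    (f g : X → Y) (hf : Continuous f) (hfm : Monotone f)
    (hg : Continuous g) (hgm : Monotone g)
    (H : X × I → Y) (hH : Continuous H)
    (hH0 : ∀ x, H (x, 0) = f x) (hH1 : ∀ x, H (x, 1) = g x) :
    ∃ K : X × I → Y, Continuous K ∧
      (∀ x, K (x, 0) = f x) ∧ (∀ x, K (x, 1) = g x) ∧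
      (∀ t : I, Monotone fun x : X => K (x, t)) :=
  stmt_8_general hpos hlo hinf hbasis f g hfm hgm H hH hH0 hH1
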